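/- The active constraint set of a feasible convex program contains the union of all its essential sets: Ac(C) ⊇ ∪_{i=1}^{n_e} Es_i(C), where Es_i(C) are the essential sets of P[C], assuming the unique minimum condition. -/

import Mathlib

def Sat {ι : Type*} {d : ℕ} (X : Set (Fin d → ℝ)) (f : ι → (Fin d → ℝ) → ℝ)
    (S : Set ι) : Set (Fin d → ℝ) :=
  {x ∈ X | ∀ j ∈ S, f j x ≤ 0}

noncomputable def Jstar {ι : Type*} {d : ℕ} (X : Set (Fin d → ℝ)) (a : Fin d → ℝ)
    (f : ι → (Fin d → ℝ) → ℝ) (S : Set ι) : EReal :=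
  sInf ((fun x => ((∑ i, a i * x i : ℝ) : EReal)) '' Sat X f S)

/-! If `x` minimizes the convex `φ` over `{y ∈ K | g y ≤ 0}` and the constraint is slack at `x`,
then for every `y ∈ K` a short step `z` from `x` towards `y` keeps `g z ≤ 0`; convexity of `φ`
along the segment then turns `φ x ≤ φ z` into `φ x ≤ φ y`. So a constraint of an essential set
that is slack at the optimum could be dropped without changing the optimal value, against the
minimality of the essential set. -/

theorem exists_pos_le_one_convexComb_nonpos {u : ℝ} (hu : u < 0) (v : ℝ) :
    ∃ t : ℝ, 0 < t ∧ t ≤ 1 ∧ (1 - t) * u + t * v ≤ 0 := by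
  rcases le_or_gt v 0 with hv | hv
  · exact ⟨1, one_pos, le_rfl, by linarith⟩
  · have hvu : 0 < v - u := by linarith
    refine ⟨-u / (v - u), div_pos (neg_pos.2 hu) hvu,
      (div_le_one hvu).2 (by linarith), le_of_eq ?_⟩
    field_simp
    ring

theorem IsMinOn.of_isMinOn_sublevel_of_neg {V : Type*} [AddCommGroup V] [Module ℝ V]
    {K : Set V} {φ g : V → ℝ} {x : V} (hφ : ConvexOn ℝ K φ) (hg : ConvexOn ℝ K g)
    (hxK : x ∈ K) (hgx : g x < 0) (hmin : IsMinOn φ {y ∈ K | g y ≤ 0} x) :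
    IsMinOn φ K x := by
  intro y hyK
  obtain ⟨t, ht0, ht1, hgt⟩ := exists_pos_le_one_convexComb_nonpos hgx (g y)
  have hcomb : (1 - t) + t = 1 := by ring
  have hzK : (1 - t) • x + t • y ∈ K := hφ.1 hxK hyK (by linarith) ht0.le hcomb
  have hgz : g ((1 - t) • x + t • y) ≤ 0 := by
    simpa only [smul_eq_mul] using
      (hg.2 hxK hyK (by linarith) ht0.le hcomb).trans hgt
  have hφz : φ x ≤ φ ((1 - t) • x + t • y) := hmin ⟨hzK, hgz⟩
  have hφseg := hφ.2 hxK hyK (by linarith) ht0.le hcomb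
  simp only [smul_eq_mul] at hφseg
  show φ x ≤ φ y
  nlinarith

theorem sInf_image_coe_eq_iff_isMinOn {α : Type*} {s : Set α} {φ : α → ℝ} {x : α}
    (hx : x ∈ s) : sInf ((fun y => (φ y : EReal)) '' s) = φ x ↔ IsMinOn φ s x := by
  constructor
  · intro h y hy
    have hle : sInf ((fun y => (φ y : EReal)) '' s) ≤ φ y := sInf_le ⟨y, hy, rfl⟩
    rw [h] at hle
    exact EReal.coe_le_coe_iff.1 hle
  · intro h
    refine IsGLB.sInf_eq (IsLeast.isGLB ⟨⟨x, hx, rfl⟩, ?_⟩)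
    rintro _ ⟨y, hy, rfl⟩
    exact EReal.coe_le_coe_iff.2 (h hy)

section Sat

variable {ι : Type*} {d : ℕ} {X : Set (Fin d → ℝ)} {f : ι → (Fin d → ℝ) → ℝ}

theorem Sat_insert (j : ι) (S : Set ι) :
    Sat X f (insert j S) = {y ∈ Sat X f S | f j y ≤ 0} := by
  ext y
  simp only [Sat, Set.mem_insert_iff, forall_eq_or_imp, Set.mem_ofPred_eq]
  tauto

theorem Sat_anti {S T : Set ι} (hST : S ⊆ T) : Sat X f T ⊆ Sat X f S :=
  fun _ hy => ⟨hy.1, fun j hj => hy.2 j (hST hj)⟩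

theorem convex_Sat {S : Set ι} (hX : Convex ℝ X)
    (hf : ∀ j ∈ S, ConvexOn ℝ Set.univ (f j)) : Convex ℝ (Sat X f S) :=
  fun _ hx _ hy _ _ ha hb hab =>
    ⟨hX hx.1 hy.1 ha hb hab, fun j hj =>
      ((hf j hj).convex_le 0 ⟨Set.mem_univ _, hx.2 j hj⟩ ⟨Set.mem_univ _, hy.2 j hj⟩ ha hb hab).2⟩

theorem Jstar_eq_iff_isMinOn {a : Fin d → ℝ} {S : Set ι} {x : Fin d → ℝ} (hx : x ∈ Sat X f S) :
    Jstar X a f S = ((∑ i, a i * x i : ℝ) : EReal) ↔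
      IsMinOn (fun y => ∑ i, a i * y i) (Sat X f S) x :=
  sInf_image_coe_eq_iff_isMinOn hx

theorem Jstar_sdiff_singleton_eq {a : Fin d → ℝ} {E : Set ι} {j : ι} {x : Fin d → ℝ}
    (hX : Convex ℝ X) (hf : ∀ k ∈ E, ConvexOn ℝ Set.univ (f k)) (hj : j ∈ E)
    (hx : x ∈ Sat X f E) (hxj : f j x < 0)
    (hmin : IsMinOn (fun y => ∑ i, a i * y i) (Sat X f E) x) :
    Jstar X a f (E \ {j}) = ((∑ i, a i * x i : ℝ) : EReal) := by
  have hK : Convex ℝ (Sat X f (E \ {j})) := convex_Sat hX fun k hk => hf k hk.1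
  have hE : Sat X f E = {y ∈ Sat X f (E \ {j}) | f j y ≤ 0} := by
    rw [← Sat_insert, Set.insert_sdiff_singleton, Set.insert_eq_of_mem hj]
  rw [hE] at hmin
  refine (Jstar_eq_iff_isMinOn (Sat_anti Set.sdiff_subset hx)).2 ?_
  exact hmin.of_isMinOn_sublevel_of_neg ((dotProductBilin ℝ ℝ a).convexOn hK)
    ((hf j hj).subset (Set.subset_univ _) hK) (Sat_anti Set.sdiff_subset hx) hxj

end Sat

theorem active_contains_essential_general {ι : Type*} {d : ℕ} (X : Set (Fin d → ℝ))
    (a : Fin d → ℝ) (f : ι → (Fin d → ℝ) → ℝ) (C : Set ι)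
    (hCfin : C.Finite) (hXcv : Convex ℝ X)
    (hf : ∀ j ∈ C, ConvexOn ℝ Set.univ (f j))
    (xstar : Fin d → ℝ)
    (hmin : xstar ∈ Sat X f C ∧ ∀ y ∈ Sat X f C,
      (∑ i, a i * xstar i) ≤ ∑ i, a i * y i) :
    ∀ E ⊆ C, (Jstar X a f E = Jstar X a f C ∧
        ∀ S ⊆ C, Jstar X a f S = Jstar X a f C → E.ncard ≤ S.ncard) →
      ∀ j ∈ E, f j xstar = 0 := by
  rintro E hEC ⟨hJE, hcardmin⟩ j hjE
  by_contra hne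
  have hslack : f j xstar < 0 := (hmin.1.2 j (hEC hjE)).lt_of_ne hne
  have hJC : Jstar X a f C = ((∑ i, a i * xstar i : ℝ) : EReal) :=
    (Jstar_eq_iff_isMinOn hmin.1).2 hmin.2
  have hxE : xstar ∈ Sat X f E := Sat_anti hEC hmin.1
  have hminE := (Jstar_eq_iff_isMinOn hxE).1 (hJE.trans hJC)
  have hJS : Jstar X a f (E \ {j}) = Jstar X a f C := by
    rw [Jstar_sdiff_singleton_eq hXcv (fun k hk => hf k (hEC hk)) hjE hxE hslack hminE, hJC]
  exact (hcardmin _ (Set.sdiff_subset.trans hEC) hJS).not_gt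
    (Set.ncard_sdiff_singleton_lt_of_mem hjE (hCfin.subset hEC))

/-- The active constraint set contains every essential set: if `E ⊆ C` is an
invariant constraint set of minimal cardinality, then every constraint in `E`
is active at the unique optimal solution `xstar` of `P[C]`. -/
theorem active_contains_essential {ι : Type*} {d : ℕ} (X : Set (Fin d → ℝ))
    (a : Fin d → ℝ) (f : ι → (Fin d → ℝ) → ℝ) (C : Set ι)
    (hCfin : C.Finite) (hXcp : IsCompact X) (hXcv : Convex ℝ X)
    (hf : ∀ j ∈ C, ConvexOn ℝ Set.univ (f j))
    -- unique minimum condition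
    (humc : ∀ S ⊆ C, (Sat X f S).Nonempty →
      ∃! x, x ∈ Sat X f S ∧ ∀ y ∈ Sat X f S, (∑ i, a i * x i) ≤ ∑ i, a i * y i)
    (xstar : Fin d → ℝ)
    (hmin : xstar ∈ Sat X f C ∧ ∀ y ∈ Sat X f C,
      (∑ i, a i * xstar i) ≤ ∑ i, a i * y i) :
    ∀ E ⊆ C, (Jstar X a f E = Jstar X a f C ∧
        ∀ S ⊆ C, Jstar X a f S = Jstar X a f C → E.ncard ≤ S.ncard) →
      ∀ j ∈ E, f j xstar = 0 :=
  active_contains_essential_general X a f C hCfin hXcv hf xstar hmin
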